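/- arXiv:1302.3465 — 6 statements merged into one kernel-verified Lean document; each statement's English description precedes it below -/
import Mathlib

section
/- For subspaces a, b of a finite-dimensional complex inner product space, a = b if and only if (a ⊔ b) ⊓ (aᗮ ⊔ bᗮ) = ⊥. -/
theorem eq_iff_test {H : Type*} [NormedAddCommGroup H] [InnerProductSpace ℂ H]
    [FiniteDimensional ℂ H] (a b : Submodule ℂ H) :
    a = b ↔ (a ⊔ b) ⊓ (aᗮ ⊔ bᗮ) = ⊥ := by
  constructor
  · rintro rfl
    simp [Submodule.inf_orthogonal_eq_bot]
  · intro h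
    have hsup : aᗮ ⊔ bᗮ = (a ⊓ b)ᗮ := by
      have h0 := Submodule.inf_orthogonal aᗮ bᗮ
      rw [Submodule.orthogonal_orthogonal, Submodule.orthogonal_orthogonal] at h0
      rw [h0, Submodule.orthogonal_orthogonal]
    rw [hsup] at h
    -- show a ⊔ b = a ⊓ b by dimension
    have hle : a ⊓ b ≤ a ⊔ b := le_trans inf_le_left le_sup_left
    have hdim : Module.finrank ℂ ↥(a ⊔ b) ≤ Module.finrank ℂ ↥(a ⊓ b) := by
      have h1 := Submodule.finrank_sup_add_finrank_inf_eq (a ⊔ b) (a ⊓ b)ᗮ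
      rw [h, finrank_bot] at h1
      have h2 : Module.finrank ℂ ↥((a ⊔ b) ⊔ (a ⊓ b)ᗮ) ≤ Module.finrank ℂ H :=
        Submodule.finrank_le _
      have h3 : Module.finrank ℂ ↥(a ⊓ b) + Module.finrank ℂ ↥(a ⊓ b)ᗮ
          = Module.finrank ℂ H := Submodule.finrank_add_finrank_orthogonal _
      omega
    have heq : a ⊔ b = a ⊓ b := (Submodule.eq_of_le_of_finrank_le hle hdim).symm
    have ha : a ≤ b := le_trans (le_trans le_sup_left heq.le) inf_le_right
    have hb : b ≤ a := le_trans (le_trans le_sup_right heq.le) inf_le_left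
    exact le_antisymm ha hb
end

section
/- For subspaces p, q, r of a finite-dimensional complex inner product space H, with a = p ⊔ (q ⊓ r) and b = (p ⊔ q) ⊓ (p ⊔ r), the distribution test formula α(p,q,r) = (a ⊔ b) ⊓ (aᗮ ⊔ bᗮ) satisfies α(p,q,r) ≤ pᗮ. -/
theorem alpha_le_p_compl {H : Type*} [NormedAddCommGroup H] [InnerProductSpace ℂ H]
    [FiniteDimensional ℂ H] (p q r : Submodule ℂ H) :
    ((p ⊔ (q ⊓ r)) ⊔ ((p ⊔ q) ⊓ (p ⊔ r))) ⊓ ((p ⊔ (q ⊓ r))ᗮ ⊔ ((p ⊔ q) ⊓ (p ⊔ r))ᗮ) ≤ pᗮ := by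
  refine inf_le_right.trans (sup_le ?_ ?_)
  · exact Submodule.orthogonal_le le_sup_left
  · exact Submodule.orthogonal_le (le_inf le_sup_left le_sup_left)
end

section
/- For subspaces p, q, r of a finite-dimensional complex inner product space H, the distribution test formula α(p,q,r) = (a ⊔ b) ⊓ (aᗮ ⊔ bᗮ), where a = p ⊔ (q ⊓ r) and b = (p ⊔ q) ⊓ (p ⊔ r), satisfies dim α(p,q,r) ≤ dim(H) − dim(p). -/
theorem dim_alpha_le_codim_p {H : Type*} [NormedAddCommGroup H] [InnerProductSpace ℂ H]
    [FiniteDimensional ℂ H] (p q r : Submodule ℂ H) :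
    Module.finrank ℂ ↥(((p ⊔ (q ⊓ r)) ⊔ ((p ⊔ q) ⊓ (p ⊔ r))) ⊓ ((p ⊔ (q ⊓ r))ᗮ ⊔ ((p ⊔ q) ⊓ (p ⊔ r))ᗮ)) ≤
      Module.finrank ℂ H - Module.finrank ℂ p := by
  set a := p ⊔ (q ⊓ r) with ha
  set b := (p ⊔ q) ⊓ (p ⊔ r) with hb
  have hab : a ≤ b := sup_le (le_inf le_sup_left le_sup_left)
    (le_inf (inf_le_left.trans le_sup_right) (inf_le_right.trans le_sup_right))
  have h1 : a ⊔ b = b := sup_eq_right.2 hab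
  have h2 : aᗮ ⊔ bᗮ = aᗮ := sup_eq_left.2 (Submodule.orthogonal_le hab)
  have key : b ⊓ aᗮ ≤ pᗮ := inf_le_right.trans (Submodule.orthogonal_le le_sup_left)
  have hfin := Submodule.finrank_add_finrank_orthogonal (K := p)
  calc Module.finrank ℂ ↥((a ⊔ b) ⊓ (aᗮ ⊔ bᗮ)) = Module.finrank ℂ ↥(b ⊓ aᗮ) := by rw [h1, h2]
    _ ≤ Module.finrank ℂ ↥pᗮ := Submodule.finrank_mono key
    _ = Module.finrank ℂ H - Module.finrank ℂ p := by omega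
end

section
/- For subspaces p, q, r of a finite-dimensional complex inner product space H, the distribution test formula α(p,q,r) (with a = p ⊔ (q ⊓ r), b = (p ⊔ q) ⊓ (p ⊔ r), α = (a ⊔ b) ⊓ (aᗮ ⊔ bᗮ)) satisfies dim α(p,q,r) ≤ dim(p). -/
theorem dim_alpha_le_dim_p {H : Type*} [NormedAddCommGroup H] [InnerProductSpace ℂ H]
    [FiniteDimensional ℂ H] (p q r : Submodule ℂ H) :
    Module.finrank ℂ ↥(((p ⊔ (q ⊓ r)) ⊔ ((p ⊔ q) ⊓ (p ⊔ r))) ⊓ ((p ⊔ (q ⊓ r))ᗮ ⊔ ((p ⊔ q) ⊓ (p ⊔ r))ᗮ)) ≤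
      Module.finrank ℂ p := by
  set a := p ⊔ (q ⊓ r) with ha
  set b := (p ⊔ q) ⊓ (p ⊔ r) with hb
  have hab : a ≤ b := sup_le (le_inf le_sup_left le_sup_left)
    (le_inf (le_trans inf_le_left le_sup_right) (le_trans inf_le_right le_sup_right))
  have h1 : a ⊔ b = b := sup_eq_right.mpr hab
  have h2 : aᗮ ⊔ bᗮ = aᗮ := sup_eq_left.mpr (Submodule.orthogonal_le hab)
  rw [h1, h2, inf_comm]
  have key := Submodule.finrank_add_inf_finrank_orthogonal (𝕜 := ℂ) hab
  have E1 := Submodule.finrank_sup_add_finrank_inf_eq p q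
  have E2 := Submodule.finrank_sup_add_finrank_inf_eq p r
  have E3 := Submodule.finrank_sup_add_finrank_inf_eq (p ⊔ q) (p ⊔ r)
  have E4 := Submodule.finrank_sup_add_finrank_inf_eq p (q ⊓ r)
  have E5 := Submodule.finrank_sup_add_finrank_inf_eq p (q ⊔ r)
  have E6 := Submodule.finrank_sup_add_finrank_inf_eq q r
  have hsup : (p ⊔ q) ⊔ (p ⊔ r) = p ⊔ (q ⊔ r) := by
    rw [sup_assoc, ← sup_assoc q p r, sup_comm q p, sup_assoc, ← sup_assoc]
    simp
  rw [hsup, ← hb] at E3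
  rw [← ha] at E4
  have I1 : Module.finrank ℂ ↥(p ⊓ (q ⊔ r)) ≤ Module.finrank ℂ p :=
    Submodule.finrank_mono inf_le_left
  have I2 : Module.finrank ℂ ↥(p ⊓ (q ⊓ r)) ≤ Module.finrank ℂ ↥(p ⊓ q) :=
    Submodule.finrank_mono (le_inf inf_le_left (le_trans inf_le_right inf_le_left))
  omega
end

section
/- For subspaces p, q, r of a finite-dimensional complex inner product space H, dim α(p,q,r) ≤ dim(H)/2, where α(p,q,r) = (a ⊔ b) ⊓ (aᗮ ⊔ bᗮ) with a = p ⊔ (q ⊓ r) and b = (p ⊔ q) ⊓ (p ⊔ r). -/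
/-!
Since `a ≤ b`, the subspace `α` is the relative orthogonal complement `aᗮ ⊓ b`, of dimension
`dim b - dim a`. This failure of distributivity of `p` over `q ⊓ r` has the same dimension as the
failure of distributivity of `p` over `q ⊔ r`, namely `dim (p ⊓ (q ⊔ r)) - dim (p ⊓ q ⊔ p ⊓ r)`,
which is at most `dim p`. On the other hand `α ≤ aᗮ ≤ pᗮ`, so also `dim α ≤ dim H - dim p`.
-/

open Module

namespace Submodule

theorem finrank_sup_inf_sup_add_finrank_inf_sup_inf {K V : Type*} [DivisionRing K]
    [AddCommGroup V] [Module K V] [FiniteDimensional K V] (p q r : Submodule K V) :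
    finrank K ↥((p ⊔ q) ⊓ (p ⊔ r)) + finrank K ↥(p ⊓ q ⊔ p ⊓ r) =
      finrank K ↥(p ⊔ q ⊓ r) + finrank K ↥(p ⊓ (q ⊔ r)) := by
  have hpq := finrank_sup_add_finrank_inf_eq p q
  have hpr := finrank_sup_add_finrank_inf_eq p r
  have hqr := finrank_sup_add_finrank_inf_eq q r
  have h_sups := finrank_sup_add_finrank_inf_eq (p ⊔ q) (p ⊔ r)
  have h_infs := finrank_sup_add_finrank_inf_eq (p ⊓ q) (p ⊓ r)
  have hp_inf := finrank_sup_add_finrank_inf_eq p (q ⊓ r)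
  have hp_sup := finrank_sup_add_finrank_inf_eq p (q ⊔ r)
  rw [sup_sup_sup_comm, sup_idem] at h_sups
  rw [inf_inf_inf_comm, inf_idem] at h_infs
  omega

theorem sup_inf_orthogonal_sup_of_le {𝕜 E : Type*} [RCLike 𝕜] [NormedAddCommGroup E]
    [InnerProductSpace 𝕜 E] {a b : Submodule 𝕜 E} (hab : a ≤ b) :
    (a ⊔ b) ⊓ (aᗮ ⊔ bᗮ) = aᗮ ⊓ b := by
  rw [sup_eq_right.2 hab, sup_eq_left.2 (orthogonal_le hab), inf_comm]

end Submodule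

open Submodule in
theorem dim_alpha_le_half {H : Type*} [NormedAddCommGroup H] [InnerProductSpace ℂ H]
    [FiniteDimensional ℂ H] (p q r : Submodule ℂ H) :
    Module.finrank ℂ ↥(((p ⊔ (q ⊓ r)) ⊔ ((p ⊔ q) ⊓ (p ⊔ r))) ⊓ ((p ⊔ (q ⊓ r))ᗮ ⊔ ((p ⊔ q) ⊓ (p ⊔ r))ᗮ)) ≤
      Module.finrank ℂ H / 2 := by
  have hab : p ⊔ q ⊓ r ≤ (p ⊔ q) ⊓ (p ⊔ r) := sup_inf_le
  rw [sup_inf_orthogonal_sup_of_le hab]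
  have h_alpha := finrank_add_inf_finrank_orthogonal hab
  have h_defect := finrank_sup_inf_sup_add_finrank_inf_sup_inf p q r
  have h_alpha_perp : finrank ℂ ↥((p ⊔ q ⊓ r)ᗮ ⊓ ((p ⊔ q) ⊓ (p ⊔ r))) ≤ finrank ℂ ↥pᗮ :=
    finrank_mono (inf_le_left.trans (orthogonal_le le_sup_left))
  have h_inside_p : finrank ℂ ↥(p ⊓ (q ⊔ r)) ≤ finrank ℂ p := finrank_mono inf_le_left
  have h_compl := finrank_add_finrank_orthogonal p
  omega
end

section
/- If p, q, r are three pairwise distinct subspaces of ℂ^m (m even), each of dimension m/2, with pairwise trivial intersections, then dim α(p,q,r) = m/2, where α(p,q,r) = (a ⊔ b) ⊓ (aᗮ ⊔ bᗮ) with a = p ⊔ (q ⊓ r) and b = (p ⊔ q) ⊓ (p ⊔ r). -/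
/-!
Two subspaces of half the dimension with trivial intersection are complementary, so
`p ⊔ q = p ⊔ r = ⊤`; together with `q ⊓ r = ⊥` this collapses `a` to `p` and `b` to `⊤`.
Hence `α(p, q, r) = ⊤ ⊓ (pᗮ ⊔ ⊥) = pᗮ`, which has dimension `m - m / 2 = m / 2`.
-/

open Module Submodule

theorem Submodule.alpha_eq_orthogonal_of_sup_eq_top {𝕜 E : Type*} [RCLike 𝕜]
    [NormedAddCommGroup E] [InnerProductSpace 𝕜 E] {p q r : Submodule 𝕜 E}
    (hpq : p ⊔ q = ⊤) (hpr : p ⊔ r = ⊤) (hqr : q ⊓ r = ⊥) :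
    ((p ⊔ (q ⊓ r)) ⊔ ((p ⊔ q) ⊓ (p ⊔ r))) ⊓ ((p ⊔ (q ⊓ r))ᗮ ⊔ ((p ⊔ q) ⊓ (p ⊔ r))ᗮ) = pᗮ := by
  simp [hpq, hpr, hqr, top_orthogonal_eq_bot]

theorem dim_alpha_generic_general {m : ℕ} (hm : Even m)
    (p q r : Submodule ℂ (EuclideanSpace ℂ (Fin m)))
    (hdp : Module.finrank ℂ p = m / 2)
    (hdq : Module.finrank ℂ q = m / 2)
    (hdr : Module.finrank ℂ r = m / 2)
    (hpq' : p ⊓ q = ⊥) (hpr' : p ⊓ r = ⊥) (hqr' : q ⊓ r = ⊥) :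
    Module.finrank ℂ ↥(((p ⊔ (q ⊓ r)) ⊔ ((p ⊔ q) ⊓ (p ⊔ r))) ⊓ ((p ⊔ (q ⊓ r))ᗮ ⊔ ((p ⊔ q) ⊓ (p ⊔ r))ᗮ)) =
      m / 2 := by
  have hrank : finrank ℂ (EuclideanSpace ℂ (Fin m)) = m / 2 + m / 2 := by
    obtain ⟨k, rfl⟩ := hm
    rw [finrank_euclideanSpace_fin]
    omega
  have hpq : p ⊔ q = ⊤ := eq_top_of_disjoint p q (by omega) (disjoint_iff.mpr hpq')
  have hpr : p ⊔ r = ⊤ := eq_top_of_disjoint p r (by omega) (disjoint_iff.mpr hpr')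
  rw [alpha_eq_orthogonal_of_sup_eq_top hpq hpr hqr']
  have := p.finrank_add_finrank_orthogonal
  omega

theorem dim_alpha_generic {m : ℕ} (hm : Even m)
    (p q r : Submodule ℂ (EuclideanSpace ℂ (Fin m)))
    (hpq : p ≠ q) (hpr : p ≠ r) (hqr : q ≠ r)
    (hdp : Module.finrank ℂ p = m / 2)
    (hdq : Module.finrank ℂ q = m / 2)
    (hdr : Module.finrank ℂ r = m / 2)
    (hpq' : p ⊓ q = ⊥) (hpr' : p ⊓ r = ⊥) (hqr' : q ⊓ r = ⊥) :
    Module.finrank ℂ ↥(((p ⊔ (q ⊓ r)) ⊔ ((p ⊔ q) ⊓ (p ⊔ r))) ⊓ ((p ⊔ (q ⊓ r))ᗮ ⊔ ((p ⊔ q) ⊓ (p ⊔ r))ᗮ)) =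
      m / 2 :=
  dim_alpha_generic_general hm p q r hdp hdq hdr hpq' hpr' hqr'
end
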